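/- Suppose that in ℂ the characteristic polynomial factors as X^k − c₁X^{k−1} − c₂X^{k−2} − ⋯ − c_k = ∏_{j=1}^{s} (X − α_j)^{m_j}, where α₁,…,α_s ∈ ℂ are pairwise distinct and m₁,…,m_s ≥ 1 with m₁+⋯+m_s = k. Then for every n ≥ 0, p_{n+k−1} = Σ_{(i₁,…,i_s)∈ℕ^s, i₁+⋯+i_s = n} C(i₁+m₁−1, i₁)·α₁^{i₁} ⋯ C(i_s+m_s−1, i_s)·α_s^{i_s}, where C(a,b) denotes the binomial coefficient. -/

import Mathlib

/-!
Reversing the characteristic polynomial turns its factorization into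
`1 - c₁X - ⋯ - c_kX^k = ∏ (1 - α_j X)^{m_j}`. The recurrence together with the initial conditions
says that the generating series `∑ p_{N+k-1} X^N` is the inverse of the left-hand side, while the
inverse of `(1 - α X)^m` is `∑ C(i+m-1, i) α^i X^i`. Comparing `n`-th coefficients of the two
expressions for the inverse gives the formula.
-/

open Polynomial

namespace Polynomial

theorem reverse_X_sub_C {R : Type*} [Ring R] [Nontrivial R] (a : R) :
    reverse (X - C a) = 1 - C a * X := by
  have reverse_X : reverse (X : R[X]) = 1 := by
    rw [← mul_one X, reverse_X_mul, ← C_1, reverse_C]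
  rw [sub_eq_add_neg, ← C_neg, reverse_add_C, natDegree_X, C_neg, reverse_X, pow_one, neg_mul,
    ← sub_eq_add_neg]

theorem reverse_prod_X_sub_C_pow {R ι : Type*} [CommRing R] [IsDomain R] (s : Finset ι)
    (α : ι → R) (m : ι → ℕ) :
    reverse (∏ j ∈ s, (X - C (α j)) ^ m j) = ∏ j ∈ s, (1 - C (α j) * X) ^ m j := by
  let reverseHom : R[X] →* R[X] :=
    { toFun := reverse, map_one' := by simpa using reverse_C (1 : R),
      map_mul' := reverse_mul_of_domain }
  change reverseHom _ = _
  simp only [map_prod, map_pow]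
  exact Finset.prod_congr rfl fun j _ => congrArg (· ^ m j) (reverse_X_sub_C (α j))

theorem reflect_X_pow_sub_sum {R : Type*} [Ring R] (k : ℕ) (c : ℕ → R) :
    reflect k (X ^ k - ∑ i ∈ Finset.range k, C (c (i + 1)) * X ^ (k - (i + 1))) =
      1 - ∑ i ∈ Finset.range k, C (c (i + 1)) * X ^ (i + 1) := by
  let reflectHom : R[X] →+ R[X] := AddMonoidHom.mk' (reflect k) fun f g => reflect_add f g k
  rw [reflect_sub, reflect_monomial, revAt_le le_rfl, Nat.sub_self, pow_zero]
  have reflect_sum := map_sum reflectHom (fun i => C (c (i + 1)) * X ^ (k - (i + 1)))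
    (Finset.range k)
  simp only [reflectHom, AddMonoidHom.mk'_apply] at reflect_sum
  rw [reflect_sum]
  refine congrArg (1 - ·) (Finset.sum_congr rfl fun i hi => ?_)
  rw [reflect_C_mul_X_pow, revAt_le (Nat.sub_le _ _),
    Nat.sub_sub_self (Finset.mem_range.mp hi)]

end Polynomial

namespace PowerSeries

theorem mk_choose_mul_one_sub_C_mul_X_pow {R : Type*} [CommRing R] (a : R) (m : ℕ) :
    (mk fun i => ((i + m - 1).choose i : R) * a ^ i) * (1 - C a * X) ^ m = 1 := by
  cases m with
  | zero =>
    ext (_ | i) <;> simp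
  | succ d =>
    have h := congrArg (rescale a) (mk_add_choose_mul_one_sub_pow_eq_one (S := R) (d := d))
    rw [map_mul, map_pow, map_sub, map_one, rescale_X, rescale_mk] at h
    convert h using 4 with i
    rw [← add_assoc, Nat.add_sub_cancel, add_comm d, Nat.choose_symm_add, mul_comm]

theorem coeff_mk_mul_C_mul_X_pow {R : Type*} [CommSemiring R] (a : ℕ → R) (r : R) (j N : ℕ) :
    coeff N (mk a * (C r * X ^ j)) = if j ≤ N then r * a (N - j) else 0 := by
  rw [mul_left_comm, coeff_C_mul, coeff_mul_X_pow', apply_ite (r * ·), mul_zero, coeff_mk]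

theorem mk_mul_one_sub_sum_eq_one {R : Type*} [CommRing R] {k : ℕ} (hk : 1 ≤ k)
    {c p : ℕ → R} (hinit : ∀ i < k, p i = if i = k - 1 then 1 else 0)
    (hrec : ∀ n, p (n + k) = ∑ i ∈ Finset.range k, c (i + 1) * p (n + k - (i + 1))) :
    mk (fun N => p (N + k - 1)) * (1 - ∑ i ∈ Finset.range k, C (c (i + 1)) * X ^ (i + 1)) =
      1 := by
  ext (_ | N)
  · simp [mul_sub, Finset.mul_sum, hinit (k - 1) (by omega)]
  · -- Terms of the recurrence reaching below index `k - 1` vanish by the initial conditions.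
    have hshift : ∀ i ∈ Finset.range k, c (i + 1) * p (N + k - (i + 1)) =
        if i + 1 ≤ N + 1 then c (i + 1) * p (N + 1 - (i + 1) + k - 1) else 0 := by
      intro i hi
      have hik := Finset.mem_range.mp hi
      split_ifs with hiN
      · congr 2; omega
      · rw [hinit _ (by omega), if_neg (by omega), mul_zero]
    simp only [mul_sub, mul_one, Finset.mul_sum, map_sub, map_sum, coeff_mk_mul_C_mul_X_pow,
      coeff_mk, coeff_one]
    rw [Nat.add_right_comm, Nat.add_sub_cancel, hrec, Finset.sum_congr rfl hshift]
    simp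

theorem coeff_prod_mk {R ι : Type*} [CommSemiring R] [Fintype ι] [DecidableEq ι] (f : ι → ℕ → R)
    (n : ℕ) :
    coeff n (∏ j, mk (f j)) =
      ∑ i ∈ (Fintype.piFinset fun _ : ι => Finset.range (n + 1)).filter
          (fun i => ∑ j, i j = n), ∏ j, f j (i j) := by
  have piAntidiag_eq : Finset.piAntidiag Finset.univ n =
      (Fintype.piFinset fun _ : ι => Finset.range (n + 1)).filter (fun i => ∑ j, i j = n) := by
    ext i
    simp only [Finset.mem_piAntidiag, Finset.mem_filter, Fintype.mem_piFinset,
      Finset.mem_range, Finset.mem_univ, implies_true, and_true, iff_and_self]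
    rintro rfl j
    exact Nat.lt_succ_of_le (Finset.single_le_sum (fun _ _ => Nat.zero_le _) (Finset.mem_univ j))
  rw [coeff_prod, ← piAntidiag_eq, Finset.finsuppAntidiag, Finset.sum_map,
    ← Finset.sum_attach (Finset.piAntidiag _ _)]
  simp [coeff_mk]

end PowerSeries

theorem seq_eq_sum_multiple_roots_general (k : ℕ) (hk : 1 ≤ k) (c : ℕ → ℂ) (p : ℕ → ℂ)
    (hinit : ∀ i < k, p i = if i = k - 1 then 1 else 0)
    (hrec : ∀ n, p (n + k) = ∑ i ∈ Finset.range k, c (i + 1) * p (n + k - (i + 1)))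
    (s : ℕ) (α : Fin s → ℂ) (m : Fin s → ℕ)
    (hsum : ∑ j : Fin s, m j = k)
    (hfac : (X : ℂ[X]) ^ k - ∑ i ∈ Finset.range k, C (c (i + 1)) * X ^ (k - (i + 1)) =
      ∏ j : Fin s, (X - C (α j)) ^ m j)
    (n : ℕ) :
    p (n + k - 1) =
      ∑ i ∈ (Fintype.piFinset fun _ : Fin s => Finset.range (n + 1)).filter
          (fun i => ∑ j : Fin s, i j = n),
        ∏ j : Fin s, ((i j + m j - 1).choose (i j) : ℂ) * α j ^ i j := by
  have hdeg : (∏ j, (X - C (α j)) ^ m j).natDegree = k := by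
    rw [natDegree_prod_of_monic _ _ fun j _ => (monic_X_sub_C (α j)).pow (m j)]
    simp [hsum]
  have hreflected : (1 : ℂ[X]) - ∑ i ∈ Finset.range k, C (c (i + 1)) * X ^ (i + 1) =
      ∏ j, (1 - C (α j) * X) ^ m j := by
    rw [← reflect_X_pow_sub_sum, hfac, ← hdeg, ← reverse_prod_X_sub_C_pow, reverse]
  have hgen := PowerSeries.mk_mul_one_sub_sum_eq_one hk hinit hrec
  have hinv : (∏ j, PowerSeries.mk fun i => ((i + m j - 1).choose i : ℂ) * α j ^ i) *
      ∏ j, (1 - PowerSeries.C (α j) * PowerSeries.X) ^ m j = 1 := by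
    rw [← Finset.prod_mul_distrib]
    exact Finset.prod_eq_one fun j _ => PowerSeries.mk_choose_mul_one_sub_C_mul_X_pow _ _
  have hchar := congrArg (coeToPowerSeries.ringHom (R := ℂ)) hreflected
  simp only [map_sub, map_one, map_sum, map_prod, map_mul, map_pow,
    coeToPowerSeries.ringHom_apply, coe_C, coe_X] at hchar
  have hseries : PowerSeries.mk (fun N => p (N + k - 1)) =
      ∏ j, PowerSeries.mk fun i => ((i + m j - 1).choose i : ℂ) * α j ^ i :=
    left_inv_eq_right_inv (hchar ▸ hgen) ((mul_comm _ _).trans hinv)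
  calc p (n + k - 1) = PowerSeries.coeff n (PowerSeries.mk fun N => p (N + k - 1)) := by
        rw [PowerSeries.coeff_mk]
    _ = _ := by rw [hseries, PowerSeries.coeff_prod_mk]

/-- If the characteristic polynomial `X^k - c₁X^{k-1} - ⋯ - c_k` factors over
`ℂ` as `∏_{j=1}^s (X - α_j)^{m_j}` with the `α_j` pairwise distinct and `m_j ≥ 1`,
`m₁ + ⋯ + m_s = k`, then for every `n ≥ 0`,
`p_{n+k-1} = ∑_{i₁+⋯+i_s = n} C(i₁+m₁-1,i₁) α₁^{i₁} ⋯ C(i_s+m_s-1,i_s) α_s^{i_s}`. -/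
theorem seq_eq_sum_multiple_roots (k : ℕ) (hk : 1 ≤ k) (c : ℕ → ℂ) (p : ℕ → ℂ)
    (hinit : ∀ i < k, p i = if i = k - 1 then 1 else 0)
    (hrec : ∀ n, p (n + k) = ∑ i ∈ Finset.range k, c (i + 1) * p (n + k - (i + 1)))
    (s : ℕ) (α : Fin s → ℂ) (m : Fin s → ℕ)
    (hdist : Function.Injective α) (hm : ∀ j, 1 ≤ m j) (hsum : ∑ j : Fin s, m j = k)
    (hfac : (X : ℂ[X]) ^ k - ∑ i ∈ Finset.range k, C (c (i + 1)) * X ^ (k - (i + 1)) =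
      ∏ j : Fin s, (X - C (α j)) ^ m j)
    (n : ℕ) :
    p (n + k - 1) =
      ∑ i ∈ (Fintype.piFinset fun _ : Fin s => Finset.range (n + 1)).filter
          (fun i => ∑ j : Fin s, i j = n),
        ∏ j : Fin s, ((i j + m j - 1).choose (i j) : ℂ) * α j ^ i j :=
  seq_eq_sum_multiple_roots_general k hk c p hinit hrec s α m hsum hfac n
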